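/- Principal strongly stable sets are closed under sorting: if u_1, u_2 ∈ B(w) for a monomial w (so u_1, u_2, w all have the same degree), then both components of sort(u_1,u_2) belong to B(w). -/

import Mathlib

/-- Monomials as multisets of variable indices (smaller index = larger variable). -/
def stdList (m : Multiset ℕ) : List ℕ := m.sort (· ≤ ·)

def evens (l : List ℕ) : List ℕ := ((l.zipIdx.map Prod.swap).filter fun p => p.1 % 2 == 0).map Prod.snd

def odds (l : List ℕ) : List ℕ := ((l.zipIdx.map Prod.swap).filter fun p => p.1 % 2 == 1).map Prod.snd

/-- `sort(u,v) = (Y_1Y_3⋯Y_{2p-1}, Y_2Y_4⋯Y_{2p})` where `uv = Y_1⋯Y_{2p}` is the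
standard (weakly decreasing) factorization. -/
def sortPair (u v : Multiset ℕ) : Multiset ℕ × Multiset ℕ :=
  (((evens (stdList (u + v)) : List ℕ) : Multiset ℕ),
   ((odds (stdList (u + v)) : List ℕ) : Multiset ℕ))

/-- `memB w v` means `v ∈ B(w)`: `B(w)` is the closure of `{w}` under replacing an
occurring variable of index `j` by a variable of index `i < j` (i.e. replacing `X_j`
by `X_i` with `X_i > X_j`). -/
inductive memB (w : Multiset ℕ) : Multiset ℕ → Prop
  | base : memB w w
  | step (v : Multiset ℕ) (i j : ℕ) (hij : i < j) (hj : j ∈ v) (hv : memB w v) :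
      memB w (i ::ₘ v.erase j)

/-!
A monomial `v` lies in `B(w)` iff it has the degree of `w` and, for every `t`, at most as many
variables of index `≥ t` as `w`. A move `X_j ↦ X_i` (`i < j`) only lowers these tail counts;
conversely, matching the largest indices of `v` and `w` produces the moves, by induction on the
degree. In the weakly decreasing factorization of `u₁u₂` the variables of index `≥ t` form a final
segment, which the odd and the even positions split into two halves differing by at most one.
Their total is at most `2 · tailCount w t`, so each half is at most `tailCount w t`.
-/

/-- Indices are ordered so that `tailCount v t` is the degree of `v` in `X_t, X_{t+1}, …`, the
`t`-th tail partial sum of its exponent vector. -/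
def tailCount (v : Multiset ℕ) (t : ℕ) : ℕ := v.countP (t ≤ ·)

lemma tailCount_zero (v : Multiset ℕ) : tailCount v 0 = Multiset.card v :=
  Multiset.countP_eq_card.mpr fun a _ => Nat.zero_le a

lemma tailCount_add (u v : Multiset ℕ) (t : ℕ) :
    tailCount (u + v) t = tailCount u t + tailCount v t :=
  Multiset.countP_add _ _ _

lemma tailCount_cons_le_of_le {i j : ℕ} (hij : i ≤ j) (s : Multiset ℕ) (t : ℕ) :
    tailCount (i ::ₘ s) t ≤ tailCount (j ::ₘ s) t := by
  simp only [tailCount, Multiset.countP_cons]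
  split_ifs <;> omega

lemma tailCount_le_of_cons_le {a b : ℕ} {v w : Multiset ℕ} (hba : b ≤ a) (hv : ∀ x ∈ v, x ≤ b)
    (h : ∀ t, tailCount (b ::ₘ v) t ≤ tailCount (a ::ₘ w) t) (t : ℕ) :
    tailCount v t ≤ tailCount w t := by
  have ht := h t
  simp only [tailCount, Multiset.countP_cons] at ht ⊢
  by_cases htb : t ≤ b
  · simp only [htb, le_trans htb hba, if_true] at ht
    omega
  · have : v.countP (t ≤ ·) = 0 := Multiset.countP_eq_zero.mpr fun x hx => by
      have := hv x hx; omega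
    omega

namespace memB

variable {w v : Multiset ℕ}

lemma card_eq (h : memB w v) : Multiset.card v = Multiset.card w := by
  induction h with
  | base => rfl
  | step v i j _ hj _ ih => rw [Multiset.card_cons, Multiset.card_erase_add_one hj, ih]

lemma tailCount_le (h : memB w v) (t : ℕ) : tailCount v t ≤ tailCount w t := by
  induction h with
  | base => exact le_rfl
  | step v i j hij hj _ ih =>
    calc tailCount (i ::ₘ v.erase j) t ≤ tailCount (j ::ₘ v.erase j) t :=
          tailCount_cons_le_of_le hij.le _ t
      _ = tailCount v t := by rw [Multiset.cons_erase hj]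
      _ ≤ tailCount w t := ih

lemma cons (a : ℕ) (h : memB w v) : memB (a ::ₘ w) (a ::ₘ v) := by
  induction h with
  | base => exact base
  | step v i j hij hj _ ih =>
    have := step _ i j hij (Multiset.mem_cons_of_mem hj) ih
    rwa [Multiset.erase_cons_tail_of_mem hj, Multiset.cons_swap] at this

lemma cons_of_le {a b : ℕ} (hba : b ≤ a) (h : memB w v) : memB (a ::ₘ w) (b ::ₘ v) := by
  rcases hba.eq_or_lt with rfl | hlt
  · exact h.cons b
  · simpa using step _ b a hlt (Multiset.mem_cons_self a v) (h.cons a)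

end memB

theorem memB_of_tailCount_le {w v : Multiset ℕ} (hcard : Multiset.card v = Multiset.card w)
    (hle : ∀ t, tailCount v t ≤ tailCount w t) : memB w v := by
  induction hn : Multiset.card w generalizing w v with
  | zero =>
    rw [Multiset.card_eq_zero.mp hn, Multiset.card_eq_zero.mp (hcard.trans hn)]
    exact memB.base
  | succ n ih =>
    have hw : w ≠ 0 := Multiset.card_pos.mp (by omega)
    have hv : v ≠ 0 := Multiset.card_pos.mp (by omega)
    obtain ⟨a, ha, hamax⟩ := Multiset.exists_max_image id hw
    obtain ⟨b, hb, hbmax⟩ := Multiset.exists_max_image id hv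
    have hba : b ≤ a := by
      obtain ⟨x, hx, hbx⟩ := Multiset.countP_pos.mp
        ((Multiset.countP_pos.mpr ⟨b, hb, le_rfl⟩).trans_le (hle b))
      exact hbx.trans (hamax x hx)
    rw [← Multiset.cons_erase ha, ← Multiset.cons_erase hb] at hle ⊢
    have hvb (x : ℕ) (hx : x ∈ v.erase b) : x ≤ b := hbmax x (Multiset.mem_of_mem_erase hx)
    refine (ih ?_ (tailCount_le_of_cons_le hba hvb hle) ?_).cons_of_le hba
    · simp only [Multiset.card_erase_of_mem ha, Multiset.card_erase_of_mem hb, hcard]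
    · simp [Multiset.card_erase_of_mem ha, hn]

theorem memB_iff {w v : Multiset ℕ} :
    memB w v ↔ Multiset.card v = Multiset.card w ∧ ∀ t, tailCount v t ≤ tailCount w t :=
  ⟨fun h => ⟨h.card_eq, h.tailCount_le⟩, fun h => memB_of_tailCount_le h.1 h.2⟩

lemma evens_cons (a : ℕ) (l : List ℕ) : evens (a :: l) = a :: odds l := by
  have hshift (n : ℕ) : ((n + 1) % 2 == 0) = (n % 2 == 1) := by simp only [beq_eq_beq]; omega
  simp [evens, odds, List.zipIdx_cons, List.zipIdx_succ, List.filter_map, Function.comp_def,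
    hshift]

lemma odds_cons (a : ℕ) (l : List ℕ) : odds (a :: l) = evens l := by
  have hshift (n : ℕ) : ((n + 1) % 2 == 1) = (n % 2 == 0) := by simp only [beq_eq_beq]; omega
  simp [evens, odds, List.zipIdx_cons, List.zipIdx_succ, List.filter_map, Function.comp_def,
    hshift]

lemma evens_append_odds_perm (l : List ℕ) : (evens l ++ odds l).Perm l := by
  induction l with
  | nil => rfl
  | cons a l ih =>
    rw [evens_cons, odds_cons, List.cons_append]
    exact (List.perm_append_comm.trans ih).cons a

lemma length_odds_le_length_evens (l : List ℕ) :
    (odds l).length ≤ (evens l).length ∧ (evens l).length ≤ (odds l).length + 1 := by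
  induction l with
  | nil => simp [evens, odds]
  | cons a l ih => simp only [evens_cons, odds_cons, List.length_cons]; omega

lemma countP_evens_odds_balanced {p : ℕ → Bool} {l : List ℕ}
    (hl : l.Pairwise fun a b => p a → p b) :
    (evens l).countP p ≤ (odds l).countP p + 1 ∧ (odds l).countP p ≤ (evens l).countP p + 1 := by
  induction l with
  | nil => simp [evens, odds]
  | cons a l ih =>
    obtain ⟨hal, hl⟩ := List.pairwise_cons.mp hl
    rw [evens_cons, odds_cons, List.countP_cons]
    by_cases ha : p a
    · have hall (x) (hx : x ∈ evens l ++ odds l) : p x :=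
        hal x ((evens_append_odds_perm l).subset hx) ha
      rw [if_pos ha, List.countP_eq_length.mpr fun x hx => hall x (List.mem_append_left _ hx),
        List.countP_eq_length.mpr fun x hx => hall x (List.mem_append_right _ hx)]
      have := length_odds_le_length_evens l
      omega
    · rw [if_neg ha]
      have := ih hl
      omega

lemma tailCount_evens_odds_balanced {l : List ℕ} (hl : l.Pairwise (· ≤ ·)) (t : ℕ) :
    tailCount (evens l) t ≤ tailCount (odds l) t + 1 ∧
      tailCount (odds l) t ≤ tailCount (evens l) t + 1 := by
  simp only [tailCount, Multiset.coe_countP]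
  exact countP_evens_odds_balanced <| hl.imp fun hab hta =>
    decide_eq_true ((of_decide_eq_true hta).trans hab)

theorem memB_of_add_eq_of_balanced {w u₁ u₂ v₁ v₂ : Multiset ℕ} (h₁ : memB w u₁) (h₂ : memB w u₂)
    (hsum : v₁ + v₂ = u₁ + u₂)
    (hbal : ∀ t, tailCount v₁ t ≤ tailCount v₂ t + 1 ∧ tailCount v₂ t ≤ tailCount v₁ t + 1) :
    memB w v₁ ∧ memB w v₂ := by
  have htotal (t : ℕ) : tailCount v₁ t + tailCount v₂ t = tailCount u₁ t + tailCount u₂ t := by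
    rw [← tailCount_add, hsum, tailCount_add]
  have hcard := htotal 0
  have hbal₀ := hbal 0
  simp only [tailCount_zero, h₁.card_eq, h₂.card_eq] at hcard hbal₀
  simp only [memB_iff]
  refine ⟨⟨by omega, fun t => ?_⟩, ⟨by omega, fun t => ?_⟩⟩ <;>
  · have := htotal t; have := hbal t; have := h₁.tailCount_le t; have := h₂.tailCount_le t
    omega

/-- principal strongly stable sets are closed under sorting: if
`u_1, u_2 ∈ B(w)` then both components of `sort(u_1,u_2)` belong to `B(w)`. -/
theorem memB_sortPair (w u₁ u₂ : Multiset ℕ) (h₁ : memB w u₁) (h₂ : memB w u₂) :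
    memB w (sortPair u₁ u₂).1 ∧ memB w (sortPair u₁ u₂).2 := by
  refine memB_of_add_eq_of_balanced h₁ h₂ ?_
    (tailCount_evens_odds_balanced (Multiset.pairwise_sort _ _))
  rw [sortPair, Multiset.coe_add, Multiset.coe_eq_coe.mpr (evens_append_odds_perm _)]
  exact Multiset.sort_eq _ _
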